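/- arXiv:1502.05473 — 2 statements merged into one kernel-verified Lean document; each statement's English description precedes it below -/
import Mathlib

section
/- Let f₁(s) = ∫_{s₀}^s (c₁ξ²)/√(c₁²ξ⁴ − 1) dξ for a constant c₁ with c₁²s⁴ > 1 on the domain. Then f₁ satisfies the differential equation f₁''/(f₁'(1 − f₁'²)) = 2/s. -/
theorem stmt_0 (c₁ s₀ a b : ℝ) (hc : c₁ ≠ 0) (ha : 0 < a) (hab : a < b)
    (hs₀ : s₀ ∈ Set.Ioo a b)
    (hdom : ∀ s ∈ Set.Ioo a b, 1 < c₁ ^ 2 * s ^ 4)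
    (f₁ : ℝ → ℝ)
    (hf : ∀ s, f₁ s = ∫ ξ in s₀..s, (c₁ * ξ ^ 2) / Real.sqrt (c₁ ^ 2 * ξ ^ 4 - 1)) :
    ∀ s ∈ Set.Ioo a b,
      deriv (deriv f₁) s / (deriv f₁ s * (1 - (deriv f₁ s) ^ 2)) = 2 / s := by
  have hopen : IsOpen (Set.Ioo a b) := isOpen_Ioo
  set g : ℝ → ℝ := fun ξ => (c₁ * ξ ^ 2) / Real.sqrt (c₁ ^ 2 * ξ ^ 4 - 1) with hg
  have hf' : f₁ = fun s => ∫ ξ in s₀..s, g ξ := funext hf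
  have hupos : ∀ x ∈ Set.Ioo a b, 0 < c₁ ^ 2 * x ^ 4 - 1 := fun x hx => by
    have := hdom x hx; linarith
  have hcont : ContinuousOn g (Set.Ioo a b) := by
    apply ContinuousOn.div
    · fun_prop
    · exact (Continuous.continuousOn (by fun_prop)).sqrt
    · intro x hx
      exact Real.sqrt_ne_zero'.mpr (hupos x hx)
  have hderiv1 : ∀ x ∈ Set.Ioo a b, HasDerivAt f₁ (g x) x := by
    intro x hx
    rw [hf']
    have hsub : Set.uIcc s₀ x ⊆ Set.Ioo a b := Set.ordConnected_Ioo.uIcc_subset hs₀ hx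
    have hint : IntervalIntegrable g MeasureTheory.volume s₀ x :=
      (hcont.mono hsub).intervalIntegrable
    have hca : ContinuousAt g x := hcont.continuousAt (hopen.mem_nhds hx)
    exact intervalIntegral.integral_hasDerivAt_right hint
      (hcont.stronglyMeasurableAtFilter hopen x hx) hca
  have hEq : Set.EqOn (deriv f₁) g (Set.Ioo a b) := fun x hx => (hderiv1 x hx).deriv
  intro s hs
  have hspos : 0 < s := lt_trans ha hs.1
  have hs0 : s ≠ 0 := ne_of_gt hspos
  have hu : 0 < c₁ ^ 2 * s ^ 4 - 1 := hupos s hs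
  set q : ℝ := Real.sqrt (c₁ ^ 2 * s ^ 4 - 1) with hqdef
  have hqpos : 0 < q := Real.sqrt_pos.mpr hu
  have hq : q ≠ 0 := ne_of_gt hqpos
  have hq2 : q ^ 2 = c₁ ^ 2 * s ^ 4 - 1 := Real.sq_sqrt hu.le
  -- derivative of g at s
  have hpoly : HasDerivAt (fun x : ℝ => c₁ ^ 2 * x ^ 4 - 1) (c₁ ^ 2 * (4 * s ^ 3)) s := by
    simpa using ((hasDerivAt_pow 4 s).const_mul (c₁ ^ 2)).sub_const 1
  have hsqrt : HasDerivAt (fun x : ℝ => Real.sqrt (c₁ ^ 2 * x ^ 4 - 1))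
      (c₁ ^ 2 * (4 * s ^ 3) / (2 * q)) s :=
    hpoly.sqrt (ne_of_gt hu)
  have hnum : HasDerivAt (fun x : ℝ => c₁ * x ^ 2) (c₁ * (2 * s)) s := by
    simpa using (hasDerivAt_pow 2 s).const_mul c₁
  have hderg : HasDerivAt g
      ((c₁ * (2 * s) * q - c₁ * s ^ 2 * (c₁ ^ 2 * (4 * s ^ 3) / (2 * q))) / q ^ 2) s :=
    hnum.div hsqrt hq
  have hev : deriv f₁ =ᶠ[nhds s] g :=
    Filter.eventuallyEq_of_mem (hopen.mem_nhds hs) hEq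
  have hd2 : deriv (deriv f₁) s
      = (c₁ * (2 * s) * q - c₁ * s ^ 2 * (c₁ ^ 2 * (4 * s ^ 3) / (2 * q))) / q ^ 2 := by
    rw [hev.deriv_eq, hderg.deriv]
  have hd1 : deriv f₁ s = c₁ * s ^ 2 / q := hEq hs
  rw [hd1, hd2]
  -- denominator nonzero
  have hgs2 : (c₁ * s ^ 2 / q) ^ 2 = c₁ ^ 2 * s ^ 4 / (c₁ ^ 2 * s ^ 4 - 1) := by
    rw [div_pow, hq2]; ring_nf
  have h1lt : 1 < (c₁ * s ^ 2 / q) ^ 2 := by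
    rw [hgs2, lt_div_iff₀ hu]; linarith
  have hden : c₁ * s ^ 2 / q * (1 - (c₁ * s ^ 2 / q) ^ 2) ≠ 0 := by
    apply mul_ne_zero
    · exact div_ne_zero (mul_ne_zero hc (pow_ne_zero 2 hs0)) hq
    · exact ne_of_lt (by linarith)
  rw [div_eq_div_iff hden hs0]
  field_simp
  nlinarith [hq2, sq_nonneg q, hqpos]
end

section
/- Let f₁(s) = ∫_{s₀}^s c₁/√(c₁² − ξ^{4/3}) dξ for a constant c₁ with c₁² > s^{4/3} on the domain. Then f₁ satisfies the differential equation −3f₁''/(f₁'(1 − f₁'²)) = 2/s. -/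
/-! By the fundamental theorem of calculus `f₁' = g` with `g = c / √(c² - s^p)`, `p = 4/3`.
Writing `u = c² - s^p`, one has `g' = p s^(p-1) / (2u) · g` and `1 - g² = -s^p / u`, so
`-3 g' / (g (1 - g²)) = 3p / (2s)`, which is `2 / s` for `p = 4/3`. -/

open Filter Set Topology

lemma hasDerivAt_div_sqrt_sub_rpow {c p s : ℝ} (hs : s ≠ 0) (hsc : s ^ p < c ^ 2) :
    HasDerivAt (fun t => c / √(c ^ 2 - t ^ p))
      (p * s ^ (p - 1) / (2 * (c ^ 2 - s ^ p)) * (c / √(c ^ 2 - s ^ p))) s := by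
  have hu : 0 < c ^ 2 - s ^ p := sub_pos.mpr hsc
  have hsqrt : 0 < √(c ^ 2 - s ^ p) := Real.sqrt_pos.mpr hu
  refine ((hasDerivAt_const s c).div
    (((Real.hasDerivAt_rpow_const (p := p) (Or.inl hs)).const_sub (c ^ 2)).sqrt hu.ne')
    hsqrt.ne').congr_deriv ?_
  field_simp
  rw [Real.sq_sqrt hu.le]
  ring

lemma one_sub_sq_div_sqrt_sub {c x : ℝ} (hx : x < c ^ 2) :
    1 - (c / √(c ^ 2 - x)) ^ 2 = -x / (c ^ 2 - x) := by
  have hu : 0 < c ^ 2 - x := sub_pos.mpr hx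
  rw [div_pow, Real.sq_sqrt hu.le]
  field_simp
  ring

lemma neg_three_mul_deriv_div_sqrt_sub_rpow {c p s : ℝ} {g : ℝ → ℝ}
    (hg : g = fun t => c / √(c ^ 2 - t ^ p)) (hc : c ≠ 0) (hs : 0 < s) (hsc : s ^ p < c ^ 2) :
    -3 * deriv g s / (g s * (1 - g s ^ 2)) = 3 * p / (2 * s) := by
  subst hg
  have hu : 0 < c ^ 2 - s ^ p := sub_pos.mpr hsc
  rw [(hasDerivAt_div_sqrt_sub_rpow hs.ne' hsc).deriv, one_sub_sq_div_sqrt_sub hsc,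
    Real.rpow_sub_one hs.ne']
  field_simp

lemma deriv_integral_eventuallyEq {g : ℝ → ℝ} {U : Set ℝ} {s₀ s : ℝ} (hU : IsOpen U)
    (hU' : U.OrdConnected) (hg : ContinuousOn g U) (hs₀ : s₀ ∈ U) (hs : s ∈ U) :
    deriv (fun t => ∫ ξ in s₀..t, g ξ) =ᶠ[𝓝 s] g := by
  filter_upwards [hU.mem_nhds hs] with t ht
  exact (intervalIntegral.integral_hasDerivAt_right
    ((hg.mono (hU'.uIcc_subset hs₀ ht)).intervalIntegrable)
    (hg.stronglyMeasurableAtFilter hU t ht) (hg.continuousAt (hU.mem_nhds ht))).deriv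

theorem stmt_1_general (c₁ s₀ a b : ℝ) (hc : c₁ ≠ 0) (ha : 0 < a)
    (hs₀ : s₀ ∈ Set.Ioo a b)
    (hdom : ∀ s ∈ Set.Ioo a b, s ^ ((4 : ℝ) / 3) < c₁ ^ 2)
    (f₁ : ℝ → ℝ)
    (hf : ∀ s, f₁ s = ∫ ξ in s₀..s, c₁ / Real.sqrt (c₁ ^ 2 - ξ ^ ((4 : ℝ) / 3))) :
    ∀ s ∈ Set.Ioo a b,
      (-3 * deriv (deriv f₁) s) / (deriv f₁ s * (1 - (deriv f₁ s) ^ 2)) = 2 / s := by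
  intro s hs
  have hcont : ContinuousOn (fun t => c₁ / √(c₁ ^ 2 - t ^ ((4 : ℝ) / 3))) (Ioo a b) :=
    fun t ht => (hasDerivAt_div_sqrt_sub_rpow (ha.trans ht.1).ne'
      (hdom t ht)).continuousAt.continuousWithinAt
  have hderiv := deriv_integral_eventuallyEq isOpen_Ioo ordConnected_Ioo hcont hs₀ hs
  rw [← funext hf] at hderiv
  rw [hderiv.deriv_eq, hderiv.eq_of_nhds,
    neg_three_mul_deriv_div_sqrt_sub_rpow rfl hc (ha.trans hs.1) (hdom s hs)]
  ring

theorem stmt_1 (c₁ s₀ a b : ℝ) (hc : c₁ ≠ 0) (ha : 0 < a) (hab : a < b)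
    (hs₀ : s₀ ∈ Set.Ioo a b)
    (hdom : ∀ s ∈ Set.Ioo a b, s ^ ((4 : ℝ) / 3) < c₁ ^ 2)
    (f₁ : ℝ → ℝ)
    (hf : ∀ s, f₁ s = ∫ ξ in s₀..s, c₁ / Real.sqrt (c₁ ^ 2 - ξ ^ ((4 : ℝ) / 3))) :
    ∀ s ∈ Set.Ioo a b,
      (-3 * deriv (deriv f₁) s) / (deriv f₁ s * (1 - (deriv f₁ s) ^ 2)) = 2 / s :=
  stmt_1_general c₁ s₀ a b hc ha hs₀ hdom f₁ hf
end
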